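/- arXiv:2503.00832 — 6 statements merged into one kernel-verified Lean document; each statement's English description precedes it below -/
import Mathlib

section
/- Let n ≥ 3, g the n-cycle (1 2 ... n) and h the reversal i ↦ n+1-i in S_n. If n ≡ 2 (mod 4), then the intersection of ⟨g,h⟩ with A_n equals the subgroup generated by g^2 and hg, and this intersection has order n. -/
/-!
Write g for the rotation and h for the reflection. Since h² = 1 and hgh = g⁻¹, every element of
⟨g, h⟩ is g^k or g^k h, and the two kinds are distinct because h does not commute with g. For
n ≡ 2 (mod 4) both generators are odd: g is an n-cycle with n even, and h is a product of n/2
disjoint transpositions with n/2 odd. So g^k is even iff k is even, and g^k h iff k is odd; these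
are the elements (g²)^j and (g²)^j (gh). The sign is onto ±1 on ⟨g, h⟩, so its kernel has index 2
in a group of order 2n.
-/

open Equiv Equiv.Perm Subgroup
open scoped Fin.CommRing

section Dihedral

variable {G : Type*} [Group G] {r s : G}

theorem mul_zpow_eq_zpow_neg_mul (hs : s * s = 1) (hsrs : s * r * s = r⁻¹) (k : ℤ) :
    s * r ^ k = r ^ (-k) * s := by
  have hs' : s⁻¹ = s := inv_eq_of_mul_eq_one_right hs
  rw [← mul_inv_eq_iff_eq_mul, ← conj_zpow, hs', hsrs, inv_zpow, zpow_neg]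

theorem exists_zpow_of_mem_closure_pair (hs : s * s = 1) (hsrs : s * r * s = r⁻¹) {x : G}
    (hx : x ∈ closure {r, s}) : ∃ k : ℤ, x = r ^ k ∨ x = r ^ k * s := by
  have hsr := mul_zpow_eq_zpow_neg_mul hs hsrs
  induction hx using closure_induction with
  | mem y hy =>
    rcases hy with rfl | rfl
    exacts [⟨1, .inl (zpow_one y).symm⟩, ⟨0, .inr (by rw [zpow_zero, one_mul])⟩]
  | one => exact ⟨0, .inl (zpow_zero r).symm⟩
  | mul y z _ _ ihy ihz =>
    obtain ⟨a, rfl | rfl⟩ := ihy <;> obtain ⟨b, rfl | rfl⟩ := ihz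
    · exact ⟨a + b, .inl (zpow_add r a b).symm⟩
    · exact ⟨a + b, .inr (by rw [zpow_add, mul_assoc])⟩
    · exact ⟨a - b, .inr (by rw [mul_assoc, hsr, ← mul_assoc, ← zpow_add, sub_eq_add_neg])⟩
    · exact ⟨a - b, .inl (by
        rw [mul_assoc, ← mul_assoc s, hsr, mul_assoc, hs, mul_one, ← zpow_add, sub_eq_add_neg])⟩
  | inv y _ ih =>
    obtain ⟨a, rfl | rfl⟩ := ih
    · exact ⟨-a, .inl (zpow_neg r a).symm⟩
    · exact ⟨a, .inr (by
        rw [mul_inv_rev, inv_eq_of_mul_eq_one_right hs, ← zpow_neg, hsr, neg_neg])⟩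

theorem notMem_zpowers_of_mul_mul_eq_inv (hs : s * s = 1) (hsrs : s * r * s = r⁻¹)
    (hr : 2 < orderOf r) : s ∉ zpowers r := by
  intro hsr
  obtain ⟨k, rfl⟩ := mem_zpowers_iff.mp hsr
  have hcomm : Commute (r ^ k) r := (Commute.refl r).zpow_left k
  rw [hcomm.eq, mul_assoc, hs, mul_one, eq_inv_iff_mul_eq_one] at hsrs
  have hr2 : r ^ 2 = 1 := by rw [sq, hsrs]
  have := Nat.le_of_dvd two_pos (orderOf_dvd_of_pow_eq_one hr2)
  omega

theorem relIndex_zpowers_closure_pair (hs : s * s = 1) (hsrs : s * r * s = r⁻¹)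
    (hsr : s ∉ zpowers r) : (zpowers r).relIndex (closure {r, s}) = 2 := by
  rw [relIndex_eq_two_iff]
  refine ⟨s, subset_closure (Set.mem_insert_of_mem r rfl), fun b hb ↦ ?_⟩
  have hrk (k : ℤ) : r ^ k ∈ zpowers r := zpow_mem (mem_zpowers r) k
  obtain ⟨k, rfl | rfl⟩ := exists_zpow_of_mem_closure_pair hs hsrs hb
  · rw [mul_mem_cancel_left (hrk k)]
    exact .inr ⟨hrk k, hsr⟩
  · rw [mul_assoc, hs, mul_one, mul_mem_cancel_left (hrk k)]
    exact .inl ⟨hrk k, hsr⟩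

theorem card_closure_pair (hs : s * s = 1) (hsrs : s * r * s = r⁻¹) (hsr : s ∉ zpowers r) :
    Nat.card (closure {r, s}) = 2 * orderOf r := by
  have hle : zpowers r ≤ closure {r, s} :=
    zpowers_le.mpr (subset_closure (Set.mem_insert r _))
  rw [← relIndex_bot_left, ← relIndex_mul_relIndex ⊥ _ _ bot_le hle, relIndex_bot_left,
    Nat.card_zpowers, relIndex_zpowers_closure_pair hs hsrs hsr, mul_comm]

theorem card_inf_ker_mul_two {H : Subgroup G} {χ : G →* ℤˣ} {x : G} (hx : x ∈ H)
    (hχx : χ x = -1) : Nat.card ↥(H ⊓ χ.ker) * 2 = Nat.card H := by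
  have hmap : H.map χ = ⊤ := by
    refine eq_top_iff.mpr fun u _ ↦ ?_
    rcases Int.units_eq_one_or u with rfl | rfl
    exacts [one_mem _, ⟨x, hx, hχx⟩]
  rw [← relIndex_bot_left, ← relIndex_bot_left,
    ← relIndex_mul_relIndex ⊥ (H ⊓ χ.ker) H bot_le inf_le_left, inf_relIndex_left,
    relIndex_ker, hmap, card_top, Nat.card_eq_fintype_card, Fintype.card_units_int]

theorem closure_pair_inf_ker (hs : s * s = 1) (hsrs : s * r * s = r⁻¹) {χ : G →* ℤˣ}
    (hχr : χ r = -1) (hχs : χ s = -1) : closure {r, s} ⊓ χ.ker = closure {r ^ 2, r * s} := by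
  have hsq : r ^ 2 ∈ closure {r ^ 2, r * s} := subset_closure (Set.mem_insert _ _)
  have hrs : r * s ∈ closure {r ^ 2, r * s} := subset_closure (Set.mem_insert_of_mem _ rfl)
  refine le_antisymm (fun x hx ↦ ?_) ((closure_le _).mpr ?_)
  · obtain ⟨hx, hxχ⟩ := mem_inf.mp hx
    rw [MonoidHom.mem_ker] at hxχ
    obtain ⟨k, rfl | rfl⟩ := exists_zpow_of_mem_closure_pair hs hsrs hx
    · rw [map_zpow, hχr] at hxχ
      obtain ⟨j, rfl⟩ : Even k := by
        by_contra hk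
        rw [(Int.not_even_iff_odd.mp hk).neg_one_zpow] at hxχ
        exact absurd hxχ (by decide)
      rw [← two_mul, zpow_mul, zpow_two, ← sq]
      exact zpow_mem hsq j
    · rw [map_mul, map_zpow, hχr, hχs] at hxχ
      obtain ⟨j, rfl⟩ : Odd k := by
        by_contra hk
        rw [(Int.not_odd_iff_even.mp hk).neg_one_zpow] at hxχ
        exact absurd hxχ (by decide)
      rw [zpow_add_one, zpow_mul, zpow_two, ← sq, mul_assoc]
      exact mul_mem (zpow_mem hsq j) hrs
  · have hr : r ∈ closure {r, s} := subset_closure (Set.mem_insert r _)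
    have hs : s ∈ closure {r, s} := subset_closure (Set.mem_insert_of_mem r rfl)
    rintro _ (rfl | rfl)
    · exact ⟨pow_mem hr 2, by simp [hχr]⟩
    · exact ⟨mul_mem hr hs, by simp [hχr, hχs]⟩

end Dihedral

theorem Fin.rev_eq_neg_one_sub {n : ℕ} (i : Fin (n + 1)) : i.rev = -1 - i := by
  rw [← Fin.last_sub, eq_neg_of_add_eq_zero_left (Fin.last_add_one n)]

theorem Fin.revPerm_mul_self (n : ℕ) : (Fin.revPerm * Fin.revPerm : Perm (Fin n)) = 1 := by
  ext i
  simp [Perm.mul_apply]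

theorem Fin.revPerm_mul_finRotate_mul_revPerm (n : ℕ) :
    (Fin.revPerm * finRotate n * Fin.revPerm : Perm (Fin n)) = (finRotate n)⁻¹ := by
  cases n with
  | zero => exact Subsingleton.elim _ _
  | succ n =>
    refine eq_inv_of_mul_eq_one_left (Perm.ext fun i ↦ ?_)
    simp only [Perm.mul_apply, Fin.revPerm_apply, finRotate_apply, Fin.rev_eq_neg_one_sub,
      Perm.one_apply]
    ring

theorem finRotate_mul_revPerm (n : ℕ) :
    finRotate (n + 1) * Fin.revPerm = decomposeFin.symm (0, Fin.revPerm) := by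
  ext i
  refine Fin.cases ?_ (fun x ↦ ?_) i
  · simp [Perm.mul_apply]
  · rw [Perm.mul_apply, decomposeFin_symm_apply_succ]
    simp only [Fin.revPerm_apply, swap_self, Equiv.refl_apply, finRotate_apply]
    rw [Fin.rev_succ, Fin.coeSucc_eq_succ]

theorem Fin.sign_revPerm (n : ℕ) : sign (Fin.revPerm : Perm (Fin n)) = (-1) ^ (n / 2) := by
  induction n with
  | zero => rw [Subsingleton.elim Fin.revPerm 1, map_one, pow_zero]
  | succ n ih =>
    rw [← inv_mul_eq_of_eq_mul (finRotate_mul_revPerm n).symm, map_mul, map_inv,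
      Int.units_inv_eq_self, sign_finRotate, decomposeFin.symm_sign, if_pos rfl, one_mul, ih,
      ← pow_add, Int.units_pow_eq_pow_mod_two, Int.units_pow_eq_pow_mod_two _ ((n + 1) / 2)]
    congr 1
    obtain ⟨k, rfl | rfl⟩ := n.even_or_odd' <;> omega

theorem orderOf_finRotate {n : ℕ} (hn : 2 ≤ n) : orderOf (finRotate n) = n := by
  rw [(isCycle_finRotate_of_le hn).orderOf, support_finRotate_of_le hn, Finset.card_univ,
    Fintype.card_fin]

/-- `finRotate n * Fin.revPerm` is x ↦ g (h x), the paper's hg. -/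
theorem dihedral_inf_alternating_two (n : ℕ) (hn : 3 ≤ n) (h4 : n % 4 = 2) :
    Subgroup.closure {finRotate n, (Fin.revPerm : Equiv.Perm (Fin n))}
          ⊓ alternatingGroup (Fin n)
        = Subgroup.closure {(finRotate n) ^ 2, finRotate n * Fin.revPerm} ∧
      Nat.card ↥(Subgroup.closure {finRotate n, (Fin.revPerm : Equiv.Perm (Fin n))}
          ⊓ alternatingGroup (Fin n)) = n := by
  have hrev := Fin.revPerm_mul_self n
  have hrel := Fin.revPerm_mul_finRotate_mul_revPerm n
  have horder := orderOf_finRotate (show 2 ≤ n by omega)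
  have hsign_rot : sign (finRotate n) = -1 := by
    rw [sign_finRotate]
    exact Odd.neg_one_pow (Nat.odd_iff.mpr (by omega))
  have hsign_rev : sign (Fin.revPerm : Perm (Fin n)) = -1 := by
    rw [Fin.sign_revPerm]
    exact Odd.neg_one_pow (Nat.odd_iff.mpr (by omega))
  refine ⟨closure_pair_inf_ker hrev hrel hsign_rot hsign_rev, ?_⟩
  have hcard := card_inf_ker_mul_two (subset_closure (Set.mem_insert _ {Fin.revPerm})) hsign_rot
  rw [card_closure_pair hrev hrel (notMem_zpowers_of_mul_mul_eq_inv hrev hrel (by omega)),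
    horder] at hcard
  exact Nat.eq_of_mul_eq_mul_right two_pos (hcard.trans (mul_comm 2 n))
end

section
/- Let α be an order-preserving partial permutation of the chain {1 < 2 < ... < n} whose domain has size n-1, let d(α) be the unique element of {1,...,n} not in the domain of α and i(α) the unique element not in the image of α. Then the completion ᾱ of α is an even permutation if and only if d(α) and i(α) have the same parity. -/
/-- For an order-preserving partial permutation α of the chain Fin n with domain of size
n-1, gap d of the domain and gap i of the image, the completion of α is even iff d and i
have the same parity. -/
theorem completion_even_iff_gaps_same_parity (n : ℕ)
    (α : Fin n → Option (Fin n))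
    (hα : ∀ a b c : Fin n, α a = some c → α b = some c → a = b)
    (hord : ∀ a b x y : Fin n, α a = some x → α b = some y → a ≤ b → x ≤ y)
    (hdom : Nat.card {a : Fin n // (α a).isSome} + 1 = n)
    (d i : Fin n)
    (hd : α d = none)
    (hi : ∀ a : Fin n, α a ≠ some i)
    (σ : Equiv.Perm (Fin n))
    (hσ : ∀ a b : Fin n, α a = some b → σ a = b) :
    Equiv.Perm.sign σ = 1 ↔ (d : ℕ) % 2 = (i : ℕ) % 2 := by
  cases n with
  | zero => exact d.elim0
  | succ m =>
  classical
  -- the domain is exactly the complement of {d}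
  have hcard : (Finset.univ.filter (fun a : Fin (m+1) => (α a).isSome)).card = m := by
    rw [Nat.card_eq_fintype_card, Fintype.card_subtype] at hdom
    omega
  have h1 : ∀ a : Fin (m+1), a ≠ d → (α a).isSome := by
    intro a ha
    by_contra hnone
    have hsub : ({a, d} : Finset (Fin (m+1))) ⊆
        Finset.univ.filter (fun x => ¬ (α x).isSome) := by
      intro x hx
      simp only [Finset.mem_insert, Finset.mem_singleton] at hx
      rcases hx with rfl | rfl <;> simp_all
    have h2 : ({a, d} : Finset (Fin (m+1))).card = 2 := Finset.card_pair ha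
    have h3 := Finset.card_le_card hsub
    have h4 := Finset.card_filter_add_card_filter_not
      (s := (Finset.univ : Finset (Fin (m+1))))
      (p := fun x : Fin (m+1) => (α x).isSome)
    simp only [Finset.card_univ, Fintype.card_fin] at h4
    omega
  have hs : ∀ a : Fin (m+1), a ≠ d → α a = some (σ a) := by
    intro a ha
    obtain ⟨x, hx⟩ := Option.isSome_iff_exists.mp (h1 a ha)
    rw [hx, hσ a x hx]
  -- σ ∘ d.succAbove is strictly monotone and misses i
  set g : Fin m → Fin (m+1) := fun j => σ (d.succAbove j) with hgdef
  have hmono : StrictMono g := by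
    intro j k hjk
    have hab : d.succAbove j < d.succAbove k := Fin.strictMono_succAbove d hjk
    have hle := hord _ _ _ _ (hs _ (Fin.succAbove_ne d j)) (hs _ (Fin.succAbove_ne d k)) hab.le
    exact lt_of_le_of_ne hle (fun h => absurd (σ.injective h) hab.ne)
  have hne : ∀ j, g j ≠ i := by
    intro j h
    exact hi _ ((hs _ (Fin.succAbove_ne d j)).trans (congrArg some h))
  have hrange : Set.range g = Set.range (Fin.succAbove i) := by
    rw [Fin.range_succAbove]
    apply Set.eq_of_subset_of_ncard_le ?_ ?_ (Set.toFinite _)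
    · rintro _ ⟨j, rfl⟩; exact hne j
    · have hr : (Set.range g).ncard = m := by
        rw [← Nat.card_coe_set_eq, Nat.card_range_of_injective hmono.injective,
          Nat.card_eq_fintype_card, Fintype.card_fin]
      have hc : ({i}ᶜ : Set (Fin (m+1))).ncard = m := by
        have h5 := Set.ncard_add_ncard_compl ({i} : Set (Fin (m+1)))
        rw [Set.ncard_singleton, Nat.card_eq_fintype_card, Fintype.card_fin] at h5
        omega
      omega
  have hwf : WellFoundedLT (Fin m) := inferInstance
  have hgeq : g = Fin.succAbove i := (hmono.range_inj (Fin.strictMono_succAbove i)).1 hrange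
  have hg' : ∀ j, σ (d.succAbove j) = i.succAbove j := fun j => congrFun hgeq j
  have hσd : σ d = i := by
    by_contra h
    obtain ⟨j, hj⟩ := Fin.exists_succAbove_eq h
    have := σ.injective (by rw [hg' j, hj] : σ (d.succAbove j) = σ d)
    exact Fin.succAbove_ne d j this
  have hσeq : σ = (Fin.cycleRange i)⁻¹ * Fin.cycleRange d := by
    apply Equiv.ext
    intro a
    rcases eq_or_ne a d with rfl | ha
    · rw [Equiv.Perm.mul_apply, Fin.cycleRange_self, hσd, eq_comm,
        Equiv.Perm.inv_def, Equiv.symm_apply_eq, Fin.cycleRange_self]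
    · obtain ⟨j, rfl⟩ := Fin.exists_succAbove_eq ha
      rw [Equiv.Perm.mul_apply, Fin.cycleRange_succAbove, hg' j, eq_comm,
        Equiv.Perm.inv_def, Equiv.symm_apply_eq, Fin.cycleRange_succAbove]
  rw [hσeq, map_mul, map_inv, Fin.sign_cycleRange, Fin.sign_cycleRange]
  have hinv : ((-1 : ℤˣ) ^ (i : ℕ))⁻¹ = (-1) ^ (i : ℕ) := by
    rw [← inv_pow, inv_neg, inv_one]
  rw [hinv, ← pow_add, neg_one_pow_eq_one_iff_even (by decide : (-1 : ℤˣ) ≠ 1),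
    Nat.even_add, Nat.even_iff, Nat.even_iff]
  omega
end

section
/- Let n ≥ 1 and 0 ≤ k ≤ n-2. Every partial permutation of {1,...,n} whose image has size k is the restriction of some even permutation of {1,...,n}. -/
/-!
Extend the partial permutation arbitrarily to a permutation `σ`. Since its image misses at
least two points `x ≠ y`, the permutation `swap x y * σ` still extends it and has the opposite
sign, so one of the two is even.
-/

open Equiv

section

variable {β : Type*}

theorem Equiv.Perm.exists_extending_partial [Finite β] (f : β → Option β)
    (hf : ∀ a b c, f a = some c → f b = some c → a = b) :
    ∃ σ : Perm β, ∀ a b, f a = some b → σ a = b := by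
  have hinj : Function.Injective fun a : {a // (f a).isSome} => (f a).get a.2 :=
    fun a a' h => Subtype.ext <| hf a a' _ (Option.some_get a.2).symm <| by
      simp only at h
      rw [h, Option.some_get]
  obtain ⟨σ, hσ⟩ := Perm.exists_extending_pair _ _ Subtype.val_injective hinj
  refine ⟨σ, fun a b hab => ?_⟩
  simpa [hab] using hσ ⟨a, by simp [hab]⟩

theorem exists_pair_ne_of_card_subtype_add_two_le [Finite β] (q : β → Prop)
    (h : Nat.card {b // q b} + 2 ≤ Nat.card β) : ∃ x y, x ≠ y ∧ ¬ q x ∧ ¬ q y := by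
  have hcompl : Nat.card {b // ¬ q b} = Nat.card β - Nat.card {b // q b} := by
    classical
    have := Fintype.ofFinite β
    simp only [Nat.card_eq_fintype_card, Fintype.card_subtype_compl]
  have : Nontrivial {b // ¬ q b} := Finite.one_lt_card_iff_nontrivial.mp (by omega)
  obtain ⟨⟨x, hx⟩, ⟨y, hy⟩, hxy⟩ := exists_pair_ne {b // ¬ q b}
  exact ⟨x, y, fun h => hxy (Subtype.ext h), hx, hy⟩

variable [Fintype β] [DecidableEq β]

theorem Equiv.Perm.exists_sign_eq_one_of_ne (σ : Perm β) {x y : β} (hxy : x ≠ y) :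
    ∃ τ : Perm β, Perm.sign τ = 1 ∧ ∀ a, σ a ≠ x → σ a ≠ y → τ a = σ a := by
  rcases Int.units_eq_one_or (Perm.sign σ) with hσ | hσ
  · exact ⟨σ, hσ, fun _ _ _ => rfl⟩
  · refine ⟨swap x y * σ, by simp [Perm.sign_mul, Perm.sign_swap hxy, hσ], fun a hx hy => ?_⟩
    exact swap_apply_of_ne_of_ne hx hy

theorem Equiv.Perm.exists_sign_eq_one_extending_partial (f : β → Option β)
    (hf : ∀ a b c, f a = some c → f b = some c → a = b) {x y : β} (hxy : x ≠ y)
    (hx : ∀ a, f a ≠ some x) (hy : ∀ a, f a ≠ some y) :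
    ∃ τ : Perm β, Perm.sign τ = 1 ∧ ∀ a b, f a = some b → τ a = b := by
  obtain ⟨σ, hσ⟩ := Perm.exists_extending_partial f hf
  obtain ⟨τ, hτ, hτσ⟩ := σ.exists_sign_eq_one_of_ne hxy
  refine ⟨τ, hτ, fun a b hab => ?_⟩
  rw [hτσ a (by rw [hσ a b hab]; rintro rfl; exact hx a hab)
    (by rw [hσ a b hab]; rintro rfl; exact hy a hab), hσ a b hab]

end

theorem low_rank_restriction_of_even_general (n k : ℕ) (hk : k ≤ n - 2)
    (α : Fin n → Option (Fin n))
    (hα : ∀ a b c : Fin n, α a = some c → α b = some c → a = b)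
    (himg : Nat.card {b : Fin n // ∃ a, α a = some b} = k) :
    ∃ σ : Equiv.Perm (Fin n), Equiv.Perm.sign σ = 1 ∧
      ∀ a b : Fin n, α a = some b → σ a = b := by
  rcases le_or_gt n 1 with hn | hn
  · have := Fin.subsingleton_iff_le_one.mpr hn
    exact ⟨1, Perm.sign_one, fun _ _ _ => Subsingleton.elim _ _⟩
  obtain ⟨x, y, hxy, hx, hy⟩ := exists_pair_ne_of_card_subtype_add_two_le
    (fun b => ∃ a, α a = some b) (by rw [himg, Nat.card_eq_fintype_card, Fintype.card_fin]; omega)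
  exact Perm.exists_sign_eq_one_extending_partial α hα hxy
    (fun a h => hx ⟨a, h⟩) (fun a h => hy ⟨a, h⟩)

/-- Every partial permutation of {1,...,n} whose image has size k ≤ n-2 is the
restriction of some even permutation. -/
theorem low_rank_restriction_of_even (n k : ℕ) (hn : 1 ≤ n) (hk : k ≤ n - 2)
    (α : Fin n → Option (Fin n))
    (hα : ∀ a b c : Fin n, α a = some c → α b = some c → a = b)
    (himg : Nat.card {b : Fin n // ∃ a, α a = some b} = k) :
    ∃ σ : Equiv.Perm (Fin n), Equiv.Perm.sign σ = 1 ∧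
      ∀ a b : Fin n, α a = some b → σ a = b :=
  low_rank_restriction_of_even_general n k hk α hα himg
end

section
/- Let n be even. The number of partial permutations α of the chain {1,...,n} that are orientation-preserving, have domain of size n-1, and whose completion is an even permutation, equals n²(n-1)/2. -/
/-- α is orientation-preserving: among the cyclically adjacent pairs of elements of the
domain of α there is at most one descent. -/
def IsOrientationPreserving {n : ℕ} (α : Fin n → Option (Fin n)) : Prop :=
  Nat.card {p : Fin n × Fin n //
    (α p.1).isSome ∧ (α p.2).isSome ∧
    ((p.1 < p.2 ∧ ∀ c : Fin n, (α c).isSome → (c ≤ p.1 ∨ p.2 ≤ c)) ∨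
     (p.2 ≤ p.1 ∧ ∀ c : Fin n, (α c).isSome → (p.2 ≤ c ∧ c ≤ p.1))) ∧
    ∃ x y : Fin n, α p.1 = some x ∧ α p.2 = some y ∧ y < x} ≤ 1

/-! A partial permutation of `Fin (m + 1)` with domain of size `m` and completion `σ` has a single
hole `a`; read through the order embeddings `a.succAbove` and `(σ a).succAbove` it becomes a
permutation `e` of `Fin m`, and it is orientation-preserving iff `e` has at most one cyclic descent.
Such an `e` is a rotation `i ↦ i + k`, so these partial permutations are parametrised by triples
`(a, σ a, k)`. The completion has sign `(-1) ^ (a + σ a)` times the sign of the rotation, and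
rotations of `Fin m` are even when `m` is odd. So for even `n = m + 1` the count is `m` times the
number of pairs `(a, b)` with `a + b` even, and reversing `b` exchanges the two parity classes. -/

open Equiv Equiv.Perm

theorem Equiv.Perm.eq_of_apply_eq_of_ne {α : Type*} {σ τ : Perm α} (a : α)
    (h : ∀ c, c ≠ a → σ c = τ c) : σ = τ := by
  ext c
  rcases eq_or_ne c a with rfl | hc
  · by_contra hne
    have hd : σ.symm (τ c) ≠ c := fun hd => hne (by rw [← hd, apply_symm_apply, hd])
    exact hd (τ.injective ((h _ hd).symm.trans (σ.apply_symm_apply _)))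
  · exact h c hc

theorem exists_forall_eq_none_iff {ι β : Type*} [Fintype ι] {α : ι → Option β}
    (h : Nat.card {c // (α c).isSome} + 1 = Nat.card ι) :
    ∃ a, ∀ c, α c = none ↔ c = a := by
  have : Fintype.card {c // ¬ (α c).isSome} = 1 := by
    rw [Fintype.card_subtype_compl, ← Nat.card_eq_fintype_card, ← Nat.card_eq_fintype_card]
    omega
  obtain ⟨⟨a, ha⟩, hu⟩ := Fintype.card_eq_one_iff.mp this
  refine ⟨a, fun c => ⟨fun hc => congrArg Subtype.val (hu ⟨c, by simp [hc]⟩), ?_⟩⟩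
  rintro rfl
  simpa using ha

theorem sign_finCycle {n : ℕ} (k : Fin n) : sign (finCycle k) = (-1) ^ ((n - 1) * k.val) := by
  have : finCycle k = finRotate n ^ k.val :=
    DFunLike.coe_injective (by rw [coe_pow, finCycle_eq_finRotate_iterate])
  rw [this, map_pow, sign_finRotate, pow_mul]

namespace Fin

variable {m : ℕ}

theorem cyclic_adjacent_iff (i j : Fin (m + 1)) :
    ((i < j ∧ ∀ t, t ≤ i ∨ j ≤ t) ∨ (j ≤ i ∧ ∀ t, j ≤ t ∧ t ≤ i)) ↔
      i + 1 = j := by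
  by_cases hi : i = last m
  · subst hi
    simp only [last_add_one, not_lt.mpr (le_last j), false_and, false_or, le_last, and_true,
      true_and]
    exact ⟨fun h => le_antisymm (zero_le j) (h 0), fun h t => h ▸ zero_le t⟩
  · have hval : (i + 1).val = i.val + 1 := val_add_one_of_lt (lt_last_iff_ne_last.mpr hi)
    have hlast : i.val < m := lt_last_iff_ne_last.mpr hi
    simp only [Fin.ext_iff, Fin.lt_def, Fin.le_def, hval]
    constructor
    · rintro (⟨hij, h⟩ | ⟨-, h⟩)
      · have := h ⟨i + 1, by omega⟩
        simp only at this
        omega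
      · have := (h (last m)).2
        rw [val_last] at this
        omega
    · intro h
      left
      exact ⟨by omega, fun t => by omega⟩

def cyclicDescents {β : Type*} [LT β] (v : Fin (m + 1) → β) : Set (Fin (m + 1)) :=
  {i | v (i + 1) < v i}

theorem eq_last_of_add_one_lt {x : Fin (m + 1)} (h : x + 1 < x) : x = last m := by
  by_contra hx
  exact lt_asymm h (lt_add_one_iff.mpr (lt_last_iff_ne_last.mpr hx))

theorem cyclicDescents_finCycle_subsingleton (k : Fin (m + 1)) :
    (cyclicDescents (finCycle k)).Subsingleton := by
  intro i hi j hj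
  simp only [cyclicDescents, Set.mem_ofPred_eq, finCycle_apply, add_right_comm _ (1 : Fin _)]
    at hi hj
  exact add_right_cancel ((eq_last_of_add_one_lt hi).trans (eq_last_of_add_one_lt hj).symm)

theorem exists_eq_finCycle_of_cyclicDescents_subsingleton (e : Perm (Fin (m + 1)))
    (he : (cyclicDescents e).Subsingleton) : ∃ k, e = finCycle k := by
  rcases m with _ | m
  · exact ⟨0, Equiv.ext fun i => Subsingleton.elim (α := Fin 1) _ _⟩
  -- The only descent sits at `j = e⁻¹ (last _)`, so `t ↦ e (j + 1 + t)` is strictly monotone.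
  set j := e.symm (last _)
  have hasc : ∀ i ≠ j, e i < e (i + 1) := by
    have hj : j ∈ cyclicDescents e := by
      have hej : e j = last _ := e.apply_symm_apply _
      show e (j + 1) < e j
      rw [hej]
      refine lt_of_le_of_ne (le_last _) fun h => ?_
      exact add_ne_left.mpr one_ne_zero (e.injective (h.trans hej.symm))
    intro i hij
    refine lt_of_le_of_ne (not_lt.mp fun hi => hij (he hi hj)) fun h => ?_
    exact add_ne_left.mpr one_ne_zero (e.injective h).symm
  have hmono : StrictMono fun t => e (j + 1 + t) := by
    refine strictMono_iff_lt_succ.mpr fun t => ?_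
    rw [← coeSucc_eq_succ, ← add_assoc]
    refine hasc _ fun h => succ_ne_zero t ?_
    rw [add_assoc j] at h
    rw [← coeSucc_eq_succ, add_comm t.castSucc]
    exact add_left_cancel (h.trans (add_zero j).symm)
  refine ⟨-(j + 1), Equiv.ext fun i => ?_⟩
  have := hmono.apply_eq (x := i - (j + 1))
  simp only [add_sub_cancel] at this
  rw [this, finCycle_apply, sub_eq_add_neg]

def liftPartial (a b : Fin (m + 1)) (v : Fin m → Fin m) : Fin (m + 1) → Option (Fin (m + 1)) :=
  fun c => (finSuccEquiv' a c).map (b.succAbove ∘ v)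

def liftPerm (a b : Fin (m + 1)) (e : Perm (Fin m)) : Perm (Fin (m + 1)) :=
  (finSuccEquiv' a).trans (e.optionCongr.trans (finSuccEquiv' b).symm)

section lift

variable (a b : Fin (m + 1))

@[simp] theorem liftPartial_self (v : Fin m → Fin m) : liftPartial a b v a = none := by
  simp [liftPartial]

@[simp] theorem liftPartial_succAbove (v : Fin m → Fin m) (i : Fin m) :
    liftPartial a b v (a.succAbove i) = some (b.succAbove (v i)) := by
  simp [liftPartial]

theorem liftPartial_eq_none_iff (v : Fin m → Fin m) (c : Fin (m + 1)) :
    liftPartial a b v c = none ↔ c = a := by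
  simpa [liftPartial] using eq_comm

@[simp] theorem liftPerm_self (e : Perm (Fin m)) : liftPerm a b e a = b := by
  simp [liftPerm]

@[simp] theorem liftPerm_succAbove (e : Perm (Fin m)) (i : Fin m) :
    liftPerm a b e (a.succAbove i) = b.succAbove (e i) := by
  simp [liftPerm]

theorem isSome_liftPartial_iff (v : Fin m → Fin m) (c : Fin (m + 1)) :
    (liftPartial a b v c).isSome ↔ c ≠ a := by
  rw [Option.isSome_iff_ne_none, Ne, liftPartial_eq_none_iff]

theorem card_isSome_liftPartial (v : Fin m → Fin m) :
    Nat.card {c // (liftPartial a b v c).isSome} = m := by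
  rw [Nat.card_congr (Equiv.subtypeEquivRight (isSome_liftPartial_iff a b v))]
  simp [Nat.card_eq_fintype_card, Fintype.card_subtype_compl]

theorem liftPerm_eq_cycleRange_mul (e : Perm (Fin m)) :
    liftPerm a b e = b.cycleRange⁻¹ * decomposeFin.symm (0, e) * a.cycleRange := by
  ext c
  rcases eq_or_ne c a with rfl | hc
  · simp
  · obtain ⟨i, rfl⟩ := exists_succAbove_eq hc
    simp [decomposeFin_symm_apply_succ]

theorem sign_liftPerm (e : Perm (Fin m)) :
    sign (liftPerm a b e) = (-1) ^ (a.val + b.val) * sign e := by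
  simp only [liftPerm_eq_cycleRange_mul, map_mul, map_inv, sign_cycleRange,
    decomposeFin.symm_sign, if_pos, Int.units_inv_eq_self, one_mul, pow_add]
  ac_rfl

end lift

theorem isOrientationPreserving_liftPartial_iff (a b : Fin (m + 2))
    (v : Fin (m + 1) → Fin (m + 1)) :
    IsOrientationPreserving (liftPartial a b v) ↔ (cyclicDescents v).Subsingleton := by
  set f : Fin (m + 1) → Fin (m + 2) × Fin (m + 2) :=
    fun i => (a.succAbove i, a.succAbove (i + 1))
  have hf : f.Injective := fun i j h => succAbove_right_injective (congrArg Prod.fst h)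
  rw [← Set.ncard_le_one_iff_subsingleton, ← Nat.card_coe_set_eq,
    ← Nat.card_image_of_injective hf, IsOrientationPreserving,
    Nat.card_congr (Equiv.subtypeEquivRight ?_)]
  rintro ⟨p₁, p₂⟩
  rcases eq_or_ne p₁ a with rfl | h₁
  · simp [f]
  rcases eq_or_ne p₂ a with rfl | h₂
  · simp [f]
  obtain ⟨i, rfl⟩ := exists_succAbove_eq h₁
  obtain ⟨j, rfl⟩ := exists_succAbove_eq h₂
  simp only [f, liftPartial_succAbove, Option.isSome_some, isSome_liftPartial_iff, ne_eq,
    forall_iff_succAbove a, not_true_eq_false, IsEmpty.forall_iff, succAbove_ne, not_false_eq_true,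
    succAbove_lt_succAbove_iff, succAbove_le_succAbove_iff, forall_const, true_and,
    cyclic_adjacent_iff, Option.some.injEq, exists_and_left, ↓existsAndEq, exists_eq_left',
    cyclicDescents, Set.mem_image, Set.mem_ofPred_eq, Prod.mk.injEq, succAbove_inj]
  exact and_comm.trans (and_congr_left fun h => h ▸ Iff.rfl)

theorem liftPartial_inj {a a' b b' : Fin (m + 1)} {e e' : Perm (Fin m)}
    (h : liftPartial a b e = liftPartial a' b' e') : a = a' ∧ b = b' ∧ e = e' := by
  obtain rfl : a = a' := (liftPartial_eq_none_iff a' b' e' a).mp (by rw [← h, liftPartial_self])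
  have hσ : liftPerm a b e = liftPerm a b' e' := by
    refine Perm.eq_of_apply_eq_of_ne a fun c hc => ?_
    obtain ⟨i, rfl⟩ := exists_succAbove_eq hc
    simpa using congrFun h (a.succAbove i)
  obtain rfl : b = b' := by simpa using DFunLike.congr_fun hσ a
  refine ⟨rfl, rfl, Equiv.ext fun i => ?_⟩
  simpa using congrFun h (a.succAbove i)

theorem exists_liftPerm_eq (σ : Perm (Fin (m + 1))) (a : Fin (m + 1)) :
    ∃ e, σ = liftPerm a (σ a) e := by
  set E : Perm (Option (Fin m)) := ((finSuccEquiv' a).symm.trans σ).trans (finSuccEquiv' (σ a))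
  have hE : E none = none := by simp [E]
  refine ⟨removeNone E, Equiv.ext fun c => ?_⟩
  simp [liftPerm, map_equiv_removeNone, hE, E]

theorem exists_eq_liftPartial {α : Fin (m + 1) → Option (Fin (m + 1))} {a : Fin (m + 1)}
    (ha : ∀ c, α c = none ↔ c = a) {σ : Perm (Fin (m + 1))}
    (hσ : ∀ c x, α c = some x → σ c = x) :
    ∃ e : Perm (Fin m), α = liftPartial a (σ a) e ∧ σ = liftPerm a (σ a) e := by
  obtain ⟨e, he⟩ := exists_liftPerm_eq σ a
  refine ⟨e, funext fun c => ?_, he⟩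
  rcases eq_or_ne c a with rfl | hc
  · simpa using (ha c).mpr rfl
  · obtain ⟨x, hx⟩ := Option.ne_none_iff_exists'.mp (mt (ha c).mp hc)
    obtain ⟨i, rfl⟩ := exists_succAbove_eq hc
    rw [hx, liftPartial_succAbove, ← liftPerm_succAbove, ← he, hσ _ _ hx]

theorem sign_liftPerm_finCycle (hm : Even m) (a b : Fin (m + 2)) (k : Fin (m + 1)) :
    sign (liftPerm a b (finCycle k)) = (-1) ^ (a.val + b.val) := by
  rw [sign_liftPerm, sign_finCycle, add_tsub_cancel_right, pow_mul, hm.neg_one_pow, one_pow,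
    mul_one]

theorem evenCompletion_iff (hm : Even m) (α : Fin (m + 2) → Option (Fin (m + 2))) :
    (IsOrientationPreserving α ∧ Nat.card {c // (α c).isSome} + 1 = m + 2 ∧
      ∃ σ : Perm (Fin (m + 2)), sign σ = 1 ∧ ∀ c x, α c = some x → σ c = x) ↔
    ∃ a b : Fin (m + 2), Even (a.val + b.val) ∧
      ∃ k : Fin (m + 1), liftPartial a b (finCycle k) = α := by
  constructor
  · rintro ⟨hα, hcard, σ, hσ, hext⟩
    obtain ⟨a, ha⟩ := exists_forall_eq_none_iff (hcard.trans (Nat.card_fin _).symm)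
    obtain ⟨e, rfl, he⟩ := exists_eq_liftPartial ha hext
    obtain ⟨k, rfl⟩ := exists_eq_finCycle_of_cyclicDescents_subsingleton e
      ((isOrientationPreserving_liftPartial_iff _ _ _).mp hα)
    rw [he, sign_liftPerm_finCycle hm, neg_one_pow_eq_one_iff_even (by decide)] at hσ
    exact ⟨a, σ a, hσ, k, rfl⟩
  · rintro ⟨a, b, hab, k, rfl⟩
    refine ⟨(isOrientationPreserving_liftPartial_iff a b _).mpr
      (cyclicDescents_finCycle_subsingleton k), by rw [card_isSome_liftPartial],
      liftPerm a b (finCycle k), by rw [sign_liftPerm_finCycle hm, hab.neg_one_pow], ?_⟩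
    intro c x hx
    rcases eq_or_ne c a with rfl | hc
    · simp at hx
    · obtain ⟨i, rfl⟩ := exists_succAbove_eq hc
      rw [liftPartial_succAbove, Option.some_inj] at hx
      rw [liftPerm_succAbove, hx]

theorem two_mul_ncard_even_add {n : ℕ} (hn : Even n) :
    2 * {p : Fin n × Fin n | Even (p.1.val + p.2.val)}.ncard = n * n := by
  set T := {p : Fin n × Fin n | Even (p.1.val + p.2.val)}
  have hcompl : Tᶜ = (Equiv.prodCongr (Equiv.refl _) revPerm) '' T := by
    rw [Equiv.image_eq_preimage_symm]
    ext ⟨a, b⟩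
    have := b.isLt
    have := Nat.even_iff.mp hn
    simp only [T, Nat.even_iff, Set.mem_compl_iff, Set.mem_ofPred_eq, Nat.mod_two_not_eq_zero,
      prodCongr_symm, refl_symm, revPerm_symm, prodCongr_apply, coe_refl, Set.preimage_ofPred_eq,
      Prod.map_fst, id_eq, Prod.map_snd, revPerm_apply, val_rev]
    omega
  calc 2 * T.ncard = T.ncard + Tᶜ.ncard := by
        rw [hcompl, Set.ncard_image_of_injective _ (Equiv.injective _), two_mul]
    _ = n * n := by rw [Set.ncard_add_ncard_compl, Nat.card_prod, Nat.card_fin]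

theorem two_mul_card_evenCompletion (hm : Even m) :
    2 * Nat.card {α : Fin (m + 2) → Option (Fin (m + 2)) //
      IsOrientationPreserving α ∧ Nat.card {c // (α c).isSome} + 1 = m + 2 ∧
      ∃ σ : Perm (Fin (m + 2)), sign σ = 1 ∧ ∀ c x, α c = some x → σ c = x} =
    (m + 2) * (m + 2) * (m + 1) := by
  set Φ : (Fin (m + 2) × Fin (m + 2)) × Fin (m + 1) → Fin (m + 2) → Option (Fin (m + 2)) :=
    fun x => liftPartial x.1.1 x.1.2 (finCycle x.2)
  have hΦ : Φ.Injective := by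
    rintro ⟨⟨a, b⟩, k⟩ ⟨⟨a', b'⟩, k'⟩ h
    obtain ⟨rfl, rfl, hk⟩ := liftPartial_inj h
    simpa using DFunLike.congr_fun hk 0
  set T := {p : Fin (m + 2) × Fin (m + 2) | Even (p.1.val + p.2.val)}
  have hrange : ∀ α, (∃ a b : Fin (m + 2), Even (a.val + b.val) ∧
      ∃ k : Fin (m + 1), liftPartial a b (finCycle k) = α) ↔
      α ∈ Φ '' (T ×ˢ Set.univ) := by
    simp [Φ, T]
  rw [Nat.card_congr (Equiv.subtypeEquivRight fun α =>
      (evenCompletion_iff hm α).trans (hrange α)),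
    Nat.card_coe_set_eq, Set.ncard_image_of_injective _ hΦ, Set.ncard_prod, ← mul_assoc,
    two_mul_ncard_even_add (hm.add even_two), Set.ncard_univ, Nat.card_fin]

end Fin

/-- For n even, the number of orientation-preserving partial permutations of Fin n with
domain of size n-1 whose completion is an even permutation equals n²(n-1)/2. -/
theorem card_rank_sub_one_even_completion (n : ℕ) (hne : Even n) :
    (Nat.card {α : Fin n → Option (Fin n) //
        IsOrientationPreserving α ∧
        Nat.card {a : Fin n // (α a).isSome} + 1 = n ∧
        ∃ σ : Equiv.Perm (Fin n), Equiv.Perm.sign σ = 1 ∧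
          ∀ a b : Fin n, α a = some b → σ a = b} : ℚ)
      = (n : ℚ) ^ 2 * ((n : ℚ) - 1) / 2 := by
  rcases Nat.lt_or_ge n 2 with hn | hn
  · interval_cases n
    · simp
    · exact absurd hne (by decide)
  obtain ⟨m, rfl⟩ := Nat.exists_eq_add_of_le' hn
  have hcount := congrArg (Nat.cast : ℕ → ℚ)
    (Fin.two_mul_card_evenCompletion (m := m) (by simpa [Nat.even_add] using hne))
  rw [eq_div_iff two_ne_zero]
  push_cast at hcount ⊢
  linear_combination hcount
end

section
/- Let n ≥ 1 and let α be a partial permutation of {1,...,n} with domain of size n-1 whose gap d(α) of the domain and gap i(α) of the image have the same parity, where α is orientation-preserving and n is even. Then the completion of α is an even permutation. Conversely, for n even and α orientation-preserving of rank n-1, if the completion of α is even then d(α) and i(α) have the same parity. -/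
open Equiv

theorem Equiv.Perm.exists_restrict_succAbove {N : ℕ} (σ : Perm (Fin (N + 1)))
    (d : Fin (N + 1)) :
    ∃ e : Perm (Fin N), (∀ j, σ (d.succAbove j) = (σ d).succAbove (e j)) ∧
      Perm.sign σ = (-1) ^ ((d : ℕ) + (σ d : ℕ)) * Perm.sign e := by
  -- `p.cycleRange` sends `p` to `0` and `p.succAbove j` to `j.succ`, so `τ` fixes `0`.
  obtain ⟨τ, hτ_def⟩ : ∃ τ : Perm (Fin (N + 1)), τ = (σ d).cycleRange * σ * d.cycleRange⁻¹ :=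
    ⟨_, rfl⟩
  have h0 : (Perm.decomposeFin τ).1 = 0 := by
    rw [← Perm.decomposeFin_symm_apply_zero (Perm.decomposeFin τ).1
      (Perm.decomposeFin τ).2, Prod.mk.eta, symm_apply_apply, hτ_def]
    simp [Perm.inv_def]
  set e := (Perm.decomposeFin τ).2
  have hτ : τ = Perm.decomposeFin.symm (0, e) := by
    rw [← h0, Prod.mk.eta, symm_apply_apply]
  refine ⟨e, fun j => ?_, ?_⟩
  · have h := congrArg (fun π : Perm (Fin (N + 1)) => π j.succ) hτ
    simp only [hτ_def, Perm.mul_apply, Perm.inv_def, Fin.cycleRange_symm_succ,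
      Perm.decomposeFin_symm_apply_succ, swap_self, refl_apply] at h
    apply (σ d).cycleRange.injective
    rw [h, Fin.cycleRange_succAbove]
  · have h := congrArg Perm.sign hτ
    rw [Perm.decomposeFin.symm_sign, if_pos rfl, one_mul, hτ_def, map_mul, map_mul,
      Perm.sign_inv, Fin.sign_cycleRange, Fin.sign_cycleRange] at h
    calc Perm.sign σ = ((-1) ^ (d : ℕ) * (-1) ^ (d : ℕ)) *
          ((-1) ^ (σ d : ℕ) * (-1) ^ (σ d : ℕ)) * Perm.sign σ := by simp [Int.units_mul_self]
      _ = _ := by rw [← h, pow_add]; ac_rfl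

theorem Fin.exists_eq_add_of_cyclicDescent_unique {m : ℕ} {f : Fin (m + 1) → Fin (m + 1)}
    (hf : Function.Injective f)
    (hdesc : ∀ j j', f (j + 1) < f j → f (j' + 1) < f j' → j = j') :
    ∃ k, ∀ j, f j = j + k := by
  obtain ⟨j₀, hj₀⟩ : ∃ j₀, ∀ j, f (j + 1) < f j → j = j₀ := by
    by_cases h : ∃ j, f (j + 1) < f j
    · obtain ⟨j₀, h₀⟩ := h
      exact ⟨j₀, fun j hj => hdesc j j₀ hj h₀⟩
    · exact ⟨0, fun j hj => (h ⟨j, hj⟩).elim⟩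
  -- read from just after its only descent, `f` is increasing, hence the identity
  have hmono : StrictMono fun t => f (j₀ + 1 + t) := by
    refine Fin.strictMono_iff_lt_succ.mpr fun u => ?_
    have hsucc : j₀ + 1 + u.castSucc + 1 = j₀ + 1 + u.succ := by
      rw [add_assoc _ (u.castSucc : Fin (m + 1)), Fin.coeSucc_eq_succ]
    have hne : j₀ + 1 + u.castSucc ≠ j₀ := by
      rw [add_assoc, Ne, add_eq_left, add_comm 1, Fin.coeSucc_eq_succ]
      exact Fin.succ_ne_zero u
    have hne' : j₀ + 1 + u.castSucc ≠ j₀ + 1 + u.succ :=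
      fun h => (Fin.castSucc_lt_succ (i := u)).ne (add_left_cancel h)
    rw [← hsucc] at hne' ⊢
    exact lt_of_le_of_ne (not_lt.mp fun h => hne (hj₀ _ h)) (hf.ne hne')
  refine ⟨-(j₀ + 1), fun j => ?_⟩
  have h := hmono.apply_eq (x := j - (j₀ + 1))
  rwa [add_sub_cancel, sub_eq_add_neg] at h

open Fin.NatCast in
theorem finRotate_pow_apply {m : ℕ} (K : ℕ) (j : Fin (m + 1)) :
    (finRotate (m + 1) ^ K) j = j + K := by
  induction K generalizing j with
  | zero => simp
  | succ K ih => rw [pow_succ', Perm.mul_apply, ih, finRotate_apply, Nat.cast_succ, add_assoc]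

theorem Fin.sign_addRight {m : ℕ} (k : Fin (m + 1)) :
    Perm.sign (Equiv.addRight k) = Perm.sign (finRotate (m + 1)) ^ (k : ℕ) := by
  rw [← map_pow]
  congr 1
  refine Equiv.ext fun j => ?_
  rw [finRotate_pow_apply, Fin.cast_val_eq_self, coe_addRight]

theorem Fin.succAbove_cyclicAdjacent {m : ℕ} (d : Fin (m + 2)) (j : Fin (m + 1)) :
    (d.succAbove j < d.succAbove (j + 1) ∧
        ∀ c ≠ d, c ≤ d.succAbove j ∨ d.succAbove (j + 1) ≤ c) ∨
      (d.succAbove (j + 1) ≤ d.succAbove j ∧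
        ∀ c ≠ d, d.succAbove (j + 1) ≤ c ∧ c ≤ d.succAbove j) := by
  rcases eq_or_ne j (last m) with rfl | hj
  · right
    rw [Fin.last_add_one]
    refine ⟨succAbove_le_succAbove_iff.mpr (zero_le _), fun c hc => ?_⟩
    obtain ⟨t, rfl⟩ := exists_succAbove_eq hc
    simp only [succAbove_le_succAbove_iff]
    exact ⟨zero_le t, le_last t⟩
  · left
    have hv : ((j + 1 : Fin (m + 1)) : ℕ) = j + 1 :=
      val_add_one_of_lt (lt_last_iff_ne_last.mpr hj)
    refine ⟨succAbove_lt_succAbove_iff.mpr (by simp [lt_def, hv]), fun c hc => ?_⟩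
    obtain ⟨t, rfl⟩ := exists_succAbove_eq hc
    rw [succAbove_le_succAbove_iff, succAbove_le_succAbove_iff, le_def, le_def, hv]
    omega

open Finset in
theorem Option.isSome_of_card_isSome_add_one {ι β : Type*} [Fintype ι] {α : ι → Option β}
    (hdom : Nat.card {a // (α a).isSome} + 1 = Fintype.card ι) {d : ι} (hd : α d = none)
    {a : ι} (ha : a ≠ d) : (α a).isSome := by
  classical
  have hsub : univ.filter (fun a => (α a).isSome) ⊆ univ.erase d := fun x hx =>
    mem_erase.mpr ⟨by rintro rfl; simp [hd] at hx, mem_univ x⟩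
  have hcard : (univ.erase d).card ≤ (univ.filter fun a => (α a).isSome).card := by
    rw [card_erase_of_mem (mem_univ d), card_univ, ← hdom, Nat.card_eq_fintype_card,
      Fintype.card_subtype]
    omega
  have ha' : a ∈ univ.filter fun a => (α a).isSome := by
    rw [eq_of_subset_of_card_le hsub hcard]
    exact mem_erase.mpr ⟨ha, mem_univ a⟩
  exact (mem_filter.mp ha').2

def IsCyclicDescent {n : ℕ} (α : Fin n → Option (Fin n)) (p : Fin n × Fin n) : Prop :=
  (α p.1).isSome ∧ (α p.2).isSome ∧
    ((p.1 < p.2 ∧ ∀ c : Fin n, (α c).isSome → (c ≤ p.1 ∨ p.2 ≤ c)) ∨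
     (p.2 ≤ p.1 ∧ ∀ c : Fin n, (α c).isSome → (p.2 ≤ c ∧ c ≤ p.1))) ∧
    ∃ x y : Fin n, α p.1 = some x ∧ α p.2 = some y ∧ y < x

theorem IsOrientationPreserving.subsingleton {n : ℕ} {α : Fin n → Option (Fin n)}
    (hOP : IsOrientationPreserving α) : Subsingleton {p // IsCyclicDescent α p} :=
  Finite.card_le_one_iff_subsingleton.mp hOP

section Completion

variable {m : ℕ} {α : Fin (m + 2) → Option (Fin (m + 2))} {σ : Perm (Fin (m + 2))}
  {d : Fin (m + 2)} {e : Fin (m + 1) → Fin (m + 1)}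

theorem isCyclicDescent_succAbove (hd : α d = none) (hσ : ∀ a ≠ d, α a = some (σ a))
    (he : ∀ j, σ (d.succAbove j) = (σ d).succAbove (e j)) {j : Fin (m + 1)}
    (hj : e (j + 1) < e j) : IsCyclicDescent α (d.succAbove j, d.succAbove (j + 1)) := by
  have hne : ∀ c, (α c).isSome → c ≠ d := by
    rintro c hc rfl
    simp [hd] at hc
  refine ⟨by simp [hσ _ (Fin.succAbove_ne d _)], by simp [hσ _ (Fin.succAbove_ne d _)], ?_,
    _, _, hσ _ (Fin.succAbove_ne d _), hσ _ (Fin.succAbove_ne d _), ?_⟩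
  · rcases Fin.succAbove_cyclicAdjacent d j with ⟨hlt, hc⟩ | ⟨hle, hc⟩
    · exact .inl ⟨hlt, fun c h => hc c (hne c h)⟩
    · exact .inr ⟨hle, fun c h => hc c (hne c h)⟩
  · rw [he, he]
    exact Fin.strictMono_succAbove _ hj

theorem IsOrientationPreserving.cyclicDescent_unique (hOP : IsOrientationPreserving α)
    (hd : α d = none) (hσ : ∀ a ≠ d, α a = some (σ a))
    (he : ∀ j, σ (d.succAbove j) = (σ d).succAbove (e j)) {j j' : Fin (m + 1)}
    (hj : e (j + 1) < e j) (hj' : e (j' + 1) < e j') : j = j' :=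
  have := hOP.subsingleton
  Fin.succAbove_right_injective <| congrArg (fun p => p.1.1) <|
    Subsingleton.elim (α := {p // IsCyclicDescent α p})
      ⟨_, isCyclicDescent_succAbove hd hσ he hj⟩ ⟨_, isCyclicDescent_succAbove hd hσ he hj'⟩

end Completion

theorem op_completion_even_iff_gaps_same_parity_general (n : ℕ) (hne : Even n)
    (α : Fin n → Option (Fin n))
    (hOP : IsOrientationPreserving α)
    (hdom : Nat.card {a : Fin n // (α a).isSome} + 1 = n)
    (d i : Fin n)
    (hd : α d = none)
    (hi : ∀ a : Fin n, α a ≠ some i)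
    (σ : Equiv.Perm (Fin n))
    (hσ : ∀ a b : Fin n, α a = some b → σ a = b) :
    Equiv.Perm.sign σ = 1 ↔ (d : ℕ) % 2 = (i : ℕ) % 2 := by
  obtain ⟨m, rfl⟩ : ∃ m, n = m + 2 :=
    ⟨n - 2, by have := d.pos; obtain ⟨k, hk⟩ := hne; omega⟩
  have hval : ∀ a ≠ d, α a = some (σ a) := fun a ha => by
    obtain ⟨b, hb⟩ := Option.isSome_iff_exists.mp
      (Option.isSome_of_card_isSome_add_one (by simpa using hdom) hd ha)
    rw [hb, hσ a b hb]
  have hσd : σ d = i := by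
    by_contra h
    refine hi (σ.symm i) ?_
    rw [hval _ fun had => h (by rw [← had, apply_symm_apply]), apply_symm_apply]
  obtain ⟨e, he, hsign⟩ := Perm.exists_restrict_succAbove σ d
  obtain ⟨k, hk⟩ := Fin.exists_eq_add_of_cyclicDescent_unique e.injective
    fun j j' => hOP.cyclicDescent_unique hd hval he
  have he_sign : Perm.sign e = 1 := by
    rw [show e = Equiv.addRight k from Equiv.ext hk, Fin.sign_addRight, sign_finRotate,
      add_tsub_cancel_right, (by simpa [Nat.even_add] using hne : Even m).neg_one_pow, one_pow]
  rw [hsign, he_sign, mul_one, hσd, neg_one_pow_eq_one_iff_even (by decide), Nat.even_add,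
    Nat.even_iff, Nat.even_iff]
  omega

/-- For n even and α an orientation-preserving partial permutation of rank n-1 with
domain gap d and image gap i, the completion of α is even iff d and i have the same
parity. -/
theorem op_completion_even_iff_gaps_same_parity (n : ℕ) (hne : Even n)
    (α : Fin n → Option (Fin n))
    (hα : ∀ a b c : Fin n, α a = some c → α b = some c → a = b)
    (hOP : IsOrientationPreserving α)
    (hdom : Nat.card {a : Fin n // (α a).isSome} + 1 = n)
    (d i : Fin n)
    (hd : α d = none)
    (hi : ∀ a : Fin n, α a ≠ some i)
    (σ : Equiv.Perm (Fin n))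
    (hσ : ∀ a b : Fin n, α a = some b → σ a = b) :
    Equiv.Perm.sign σ = 1 ↔ (d : ℕ) % 2 = (i : ℕ) % 2 :=
  op_completion_even_iff_gaps_same_parity_general n hne α hOP hdom d i hd hi σ hσ
end

section
/- Let n ≥ 3 be odd and let g be the n-cycle (1 2 ... n) in S_n, and g_n the partial permutation with domain {1,...,n-1} given by the (n-1)-cycle (1 2 ... n-1) restricted to {1,...,n-1}. Then every element of the set {g^r · g_n^{2k} · g^s : 0 ≤ r,s ≤ n-1, 0 ≤ k ≤ (n-3)/2} (products in the inverse monoid of partial permutations) has domain {1,...,n} \ {n−r} and image {1,...,n} \ {s}, where the subtraction n−r is interpreted with n−0 = n and s = 0 interpreted as n. -/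
/-!
On `{0, …, n-2}` the partial map `g_n` is the cycle `σ = (0 1 … n-2)`, and it is undefined only at
the fixed point `n-1` of `σ`; hence every power `g_n^m` is `σ^m` with `n-1` removed from its
domain. Composing with permutations `τ` before and `υ` after yields the permutation `υ σ^m τ` with
`τ⁻¹(n-1)` removed from the domain and `υ(σ^m(n-1)) = υ(n-1)` removed from the image. For
`τ = g^r`, `υ = g^s` these points are `n-1-r` and `n-1+s mod n`, whatever `m` is.
-/

/-- The partial permutation g_n of Fin n (0-indexed): domain {0,...,n-2}, sending
i ↦ i+1 for i ≤ n-3 and n-2 ↦ 0, undefined at n-1. -/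
def gPartial (n : ℕ) (a : Fin n) : Option (Fin n) :=
  if _h1 : (a : ℕ) + 1 = n then none
  else if h2 : (a : ℕ) + 2 = n then some ⟨0, by omega⟩
  else some ⟨(a : ℕ) + 1, by have := a.isLt; omega⟩

/-- Left-to-right composition of partial maps: x(αβ) = (xα)β. -/
def pcomp {n : ℕ} (f g : Fin n → Option (Fin n)) : Fin n → Option (Fin n) :=
  fun a => (f a).bind g

/-- Powers of a partial permutation in the inverse monoid; the 0th power is the
partial identity on the domain of f (the identity of the H-class of f). -/
def ppow {n : ℕ} (f : Fin n → Option (Fin n)) : ℕ → (Fin n → Option (Fin n))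
  | 0 => fun a => (f a).map (fun _ => a)
  | m + 1 => pcomp (ppow f m) f

open Equiv

section PartialOfPerm

variable {n : ℕ}

def partialOfPerm (σ : Perm (Fin n)) (c : Fin n) : Fin n → Option (Fin n) :=
  fun a => if a = c then none else some (σ a)

theorem partialOfPerm_eq_none_iff {σ : Perm (Fin n)} {c a : Fin n} :
    partialOfPerm σ c a = none ↔ a = c := by
  simp [partialOfPerm]

theorem exists_partialOfPerm_eq_some_iff {σ : Perm (Fin n)} {c b : Fin n} :
    (∃ a, partialOfPerm σ c a = some b) ↔ b ≠ σ c := by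
  simp only [partialOfPerm, Option.ite_none_left_eq_some, Option.some.injEq]
  constructor
  · rintro ⟨a, hac, rfl⟩
    exact σ.injective.ne hac
  · intro hb
    exact ⟨σ.symm b, fun h => hb (by rw [← h, σ.apply_symm_apply]), σ.apply_symm_apply b⟩

theorem ppow_partialOfPerm {σ : Perm (Fin n)} {c : Fin n} (hc : σ c = c) (m : ℕ) :
    ppow (partialOfPerm σ c) m = partialOfPerm (σ ^ m) c := by
  induction m with
  | zero => funext a; by_cases h : a = c <;> simp [ppow, partialOfPerm, h]
  | succ m ih =>
    funext a
    by_cases h : a = c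
    · simp [ppow, pcomp, ih, partialOfPerm, h]
    · have hm : (σ ^ m) a ≠ c := fun h' =>
        h ((σ ^ m).injective (h'.trans (Perm.pow_apply_eq_self_of_apply_eq_self hc m).symm))
      simp [ppow, pcomp, ih, partialOfPerm, h, hm, pow_succ']

theorem pcomp_perm_partialOfPerm_perm (τ σ υ : Perm (Fin n)) (c : Fin n) :
    pcomp (pcomp (fun x => some (τ x)) (partialOfPerm σ c)) (fun x => some (υ x)) =
      partialOfPerm (υ * σ * τ) (τ⁻¹ c) := by
  funext a
  by_cases h : τ a = c <;> simp [pcomp, partialOfPerm, Equiv.eq_symm_apply, h]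

end PartialOfPerm

theorem val_finRotate_pow_apply {n : ℕ} (m : ℕ) (x : Fin n) :
    ((finRotate n ^ m) x : ℕ) = ((x : ℕ) + m) % n := by
  have := x.neZero
  induction m with
  | zero => simp [Nat.mod_eq_of_lt x.isLt]
  | succ m ih =>
    rw [pow_succ', Perm.mul_apply, finRotate_apply, Fin.val_add, ih, Fin.val_one', Nat.add_mod_mod,
      Nat.mod_add_mod, Nat.add_assoc]

theorem gPartial_eq_partialOfPerm {n : ℕ} (hn : 0 < n) :
    gPartial n = partialOfPerm (Fin.cycleRange ⟨n - 2, by omega⟩) ⟨n - 1, by omega⟩ := by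
  funext a
  have ha := a.isLt
  unfold gPartial partialOfPerm
  by_cases hlast : (a : ℕ) + 1 = n
  · rw [dif_pos hlast, if_pos (Fin.ext (by simp only; omega))]
  · rw [dif_neg hlast, if_neg (fun h => hlast (by simp only [h]; omega))]
    have hcycle := Fin.coe_cycleRange_of_le (i := a) (j := ⟨n - 2, by omega⟩)
      (Fin.le_def.mpr (by simp only; omega))
    simp only [Fin.ext_iff] at hcycle
    split_ifs at hcycle ⊢ with h2 <;> congr 1 <;> ext <;> simp only at h2 hcycle ⊢ <;> omega

theorem dom_im_of_g_gn_g_general (n r s k : ℕ) (h3 : 3 ≤ n) (hr : r ≤ n - 1) :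
    (∀ a : Fin n,
        (pcomp (pcomp (fun x => some (((finRotate n) ^ r) x)) (ppow (gPartial n) (2 * k)))
            (fun x => some (((finRotate n) ^ s) x)) a = none
          ↔ (a : ℕ) = n - 1 - r)) ∧
    (∀ b : Fin n,
        ((∃ a : Fin n,
            pcomp (pcomp (fun x => some (((finRotate n) ^ r) x)) (ppow (gPartial n) (2 * k)))
              (fun x => some (((finRotate n) ^ s) x)) a = some b)
          ↔ (b : ℕ) ≠ (s + n - 1) % n)) := by
  set c : Fin n := ⟨n - 1, by omega⟩
  have hc : Fin.cycleRange (⟨n - 2, by omega⟩ : Fin n) c = c :=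
    Fin.cycleRange_of_gt (Fin.mk_lt_mk.mpr (by omega))
  rw [gPartial_eq_partialOfPerm (by omega), ppow_partialOfPerm hc, pcomp_perm_partialOfPerm_perm]
  refine ⟨fun a => ?_, fun b => ?_⟩
  · rw [partialOfPerm_eq_none_iff, Perm.eq_inv_iff_eq, Fin.ext_iff, val_finRotate_pow_apply]
    have ha := a.isLt
    rw [Nat.add_mod_eq_ite, Nat.mod_eq_of_lt a.isLt, Nat.mod_eq_of_lt (by omega : r < n)]
    split_ifs <;> simp only [c] <;> omega
  · rw [exists_partialOfPerm_eq_some_iff, Perm.mul_apply, Perm.mul_apply, Perm.inv_def,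
      apply_symm_apply, Perm.pow_apply_eq_self_of_apply_eq_self hc, Ne, Fin.ext_iff, val_finRotate_pow_apply]
    simp only [c]
    rw [show n - 1 + s = s + n - 1 by omega]

/-- For odd n ≥ 3, the element g^r · g_n^{2k} · g^s (0 ≤ r,s ≤ n-1, 0 ≤ k ≤ (n-3)/2)
has domain Ω_n \ {n-r} and image Ω_n \ {s} (with n-0 = n and s = 0 read as n); in the
0-indexed setting the missing domain point is n-1-r and the missing image point is
(s + n - 1) % n. -/
theorem dom_im_of_g_gn_g (n r s k : ℕ) (h3 : 3 ≤ n) (hodd : Odd n)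
    (hr : r ≤ n - 1) (hs : s ≤ n - 1) (hk : k ≤ (n - 3) / 2) :
    (∀ a : Fin n,
        (pcomp (pcomp (fun x => some (((finRotate n) ^ r) x)) (ppow (gPartial n) (2 * k)))
            (fun x => some (((finRotate n) ^ s) x)) a = none
          ↔ (a : ℕ) = n - 1 - r)) ∧
    (∀ b : Fin n,
        ((∃ a : Fin n,
            pcomp (pcomp (fun x => some (((finRotate n) ^ r) x)) (ppow (gPartial n) (2 * k)))
              (fun x => some (((finRotate n) ^ s) x)) a = some b)
          ↔ (b : ℕ) ≠ (s + n - 1) % n)) :=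
  dom_im_of_g_gn_g_general n r s k h3 hr
end
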